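/- arXiv:1202.0020 — 8 statements merged into one kernel-verified Lean document; each statement's English description precedes it below -/
import Mathlib

section
/- For every real φ with cos φ ≠ −1, as r → 1 from below with r ∈ (0,1), the function r ↦ ∑_{k≥0} (−1)^k · (k+1) · r^k · cos(kφ) tends to cos φ / (2·(1 + cos φ)). -/
/-!
With `z = -r e^{iφ}` the `k`-th term is `Re ((k + 1) z ^ k)`, so for `|r| < 1` the series sums to
`Re (1 + r e^{iφ})⁻²`. This closed form is continuous at `r = 1` as long as `1 + e^{iφ} ≠ 0`, and
there `(1 + e^{iφ})² = 2 (1 + cos φ) e^{iφ}` gives the value `cos φ / (2 (1 + cos φ))`.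
-/

open Complex Filter

theorem hasSum_add_one_mul_geometric {K : Type*} [NormedDivisionRing K] {ξ : K} (h : ‖ξ‖ < 1) :
    HasSum (fun n : ℕ ↦ (n + 1) * ξ ^ n) ((1 - ξ)⁻¹ ^ 2) := by
  simpa [Ring.inverse_eq_inv'] using hasSum_choose_mul_geometric_of_norm_lt_one' 1 h

theorem re_add_one_mul_pow_neg_mul_exp (r φ : ℝ) (k : ℕ) :
    (((k : ℂ) + 1) * (-(r * exp (φ * I))) ^ k).re =
      (-1) ^ k * (k + 1) * r ^ k * Real.cos (k * φ) := by
  have hsplit : ((k : ℂ) + 1) * (-(r * exp (φ * I))) ^ k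
      = (((k + 1) * (-r) ^ k : ℝ) : ℂ) * exp ((k * φ : ℝ) * I) := by
    rw [neg_mul_eq_neg_mul, mul_pow, ← exp_nat_mul]
    push_cast
    ring_nf
  rw [hsplit, re_ofReal_mul, exp_ofReal_mul_I_re, neg_pow]
  ring

theorem hasSum_alternating_add_one_mul_pow_mul_cos {r : ℝ} (hr : |r| < 1) (φ : ℝ) :
    HasSum (fun k : ℕ ↦ (-1) ^ k * (k + 1) * r ^ k * Real.cos (k * φ))
      ((1 + r * exp (φ * I))⁻¹ ^ 2).re := by
  have hnorm : ‖-(r * exp (φ * I))‖ < 1 := by simpa [norm_exp_ofReal_mul_I] using hr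
  simpa only [re_add_one_mul_pow_neg_mul_exp, sub_neg_eq_add] using
    hasSum_re (hasSum_add_one_mul_geometric hnorm)

theorem one_add_exp_mul_I_sq (φ : ℝ) :
    (1 + exp (φ * I)) ^ 2 = 2 * (1 + Real.cos φ) * exp (φ * I) := by
  have h2cos : (2 * Real.cos φ : ℂ) = exp (φ * I) + (exp (φ * I))⁻¹ := by
    rw [ofReal_cos, two_cos, neg_mul, exp_neg]
  linear_combination (-exp (φ * I)) * h2cos - mul_inv_cancel₀ (exp_ne_zero (φ * I))

theorem re_inv_one_add_exp_mul_I_sq (φ : ℝ) :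
    ((1 + exp (φ * I))⁻¹ ^ 2).re = Real.cos φ / (2 * (1 + Real.cos φ)) := by
  rw [inv_pow, one_add_exp_mul_I_sq, mul_inv, ← exp_neg, ← neg_mul, ← ofReal_neg]
  norm_cast
  rw [re_ofReal_mul, exp_ofReal_mul_I_re, Real.cos_neg, div_eq_inv_mul]

theorem one_add_exp_mul_I_ne_zero {φ : ℝ} (h : Real.cos φ ≠ -1) : 1 + exp (φ * I) ≠ 0 := by
  have hc : (2 * (1 + Real.cos φ) : ℂ) ≠ 0 := by
    exact_mod_cast mul_ne_zero two_ne_zero (by contrapose! h; linarith)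
  rw [← pow_ne_zero_iff two_ne_zero, one_add_exp_mul_I_sq]
  exact mul_ne_zero hc (exp_ne_zero _)

theorem abel_sum_alternating_cos_linear (φ : ℝ) (h : Real.cos φ ≠ -1) :
    Filter.Tendsto
      (fun r : ℝ => ∑' k : ℕ, (-1 : ℝ) ^ k * (k + 1) * r ^ k * Real.cos (k * φ))
      (nhdsWithin 1 (Set.Ioo 0 1)) (nhds (Real.cos φ / (2 * (1 + Real.cos φ)))) := by
  have hne := one_add_exp_mul_I_ne_zero h
  have hcont : ContinuousAt (fun r : ℝ ↦ ((1 + r * exp (φ * I))⁻¹ ^ 2).re) 1 := by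
    fun_prop (disch := simpa)
  rw [← re_inv_one_add_exp_mul_I_sq]
  refine tendsto_nhdsWithin_congr (fun r hr ↦ ?_)
    (by simpa only [ofReal_one, one_mul] using hcont.continuousWithinAt.tendsto)
  exact ((hasSum_alternating_add_one_mul_pow_mul_cos
    (abs_lt.2 ⟨by linarith [hr.1], hr.2⟩) φ).tsum_eq).symm
end

section
/- Let m ≥ 1 be a natural number and φ a real number with cos(φ/2) ≠ 0. Then as r → 1 from below with r ∈ (0,1), the function r ↦ ∑_{k≥0} (−1)^k · C(k+m−1, k) · r^k · cos(kφ) tends to cos(mφ/2) / (2^m · cos(φ/2)^m). -/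
/-!
Writing `z = r e^{iφ}`, the series is the real part of the negative binomial series
`∑ C(k+m-1, k) (-z)^k = (1 + z)^{-m}`, which is continuous in `r` up to `r = 1` as long as
`1 + e^{iφ} = 2 cos(φ/2) e^{iφ/2}` does not vanish. Its value at `r = 1` is
`(2 cos(φ/2))^{-m} e^{-imφ/2}`, whose real part is the claimed limit.
-/

open Complex Filter

/-- For `m = 0` the truncated subtraction makes every term but the first vanish. -/
lemma hasSum_choose_add_sub_one_mul_geometric {𝕜 : Type*} [NormedDivisionRing 𝕜]
    [HasSummableGeomSeries 𝕜] (m : ℕ) {z : 𝕜} (hz : ‖z‖ < 1) :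
    HasSum (fun k : ℕ ↦ ((k + m - 1).choose k : 𝕜) * z ^ k) ((1 - z) ^ m)⁻¹ := by
  cases m with
  | zero =>
    convert hasSum_single (f := fun k : ℕ ↦ ((k + 0 - 1).choose k : 𝕜) * z ^ k) 0 fun k hk ↦ by
      simp [Nat.choose_eq_zero_of_lt (Nat.sub_lt (Nat.pos_of_ne_zero hk) one_pos)]
    simp
  | succ m =>
    convert hasSum_choose_mul_geometric_of_norm_lt_one m hz using 2 with k
    · rw [show k + (m + 1) - 1 = k + m by omega, Nat.choose_symm_add]
    · rw [one_div]

lemma one_add_exp_mul_I (φ : ℝ) :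
    1 + exp (φ * I) = 2 * Real.cos (φ / 2) * exp ((φ / 2 : ℝ) * I) := by
  rw [ofReal_cos, two_cos, add_mul, ← exp_add, ← exp_add]
  push_cast
  ring_nf
  rw [exp_zero, add_comm]

lemma re_inv_one_add_exp_mul_I_pow (m : ℕ) (φ : ℝ) :
    ((1 + exp (φ * I)) ^ m)⁻¹.re = Real.cos (m * φ / 2) / (2 ^ m * Real.cos (φ / 2) ^ m) := by
  rw [one_add_exp_mul_I, mul_pow, ← exp_nat_mul, mul_inv, ← exp_neg,
    show -(m * ((φ / 2 : ℝ) * I)) = (-(m * φ / 2) : ℝ) * I by push_cast; ring,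
    ← ofReal_ofNat, ← ofReal_mul, ← ofReal_pow, ← ofReal_inv, re_ofReal_mul,
    exp_ofReal_mul_I_re, Real.cos_neg, mul_pow, inv_mul_eq_div]

lemma hasSum_neg_one_pow_choose_mul_pow_mul_cos (m : ℕ) (φ : ℝ) {r : ℝ} (hr : |r| < 1) :
    HasSum (fun k : ℕ ↦ (-1 : ℝ) ^ k * ((k + m - 1).choose k : ℝ) * r ^ k * Real.cos (k * φ))
      ((1 + r * exp (φ * I)) ^ m)⁻¹.re := by
  have hz : ‖-(r * exp (φ * I))‖ < 1 := by
    rwa [norm_neg, norm_mul, norm_exp_ofReal_mul_I, mul_one, norm_real, Real.norm_eq_abs]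
  have hterm (k : ℕ) : ((k + m - 1).choose k : ℂ) * (-(r * exp (φ * I))) ^ k
      = ((-1) ^ k * ((k + m - 1).choose k : ℝ) * r ^ k : ℝ) * exp ((k * φ : ℝ) * I) := by
    rw [show ((k * φ : ℝ) : ℂ) * I = k * (φ * I) by push_cast; ring, exp_nat_mul]
    push_cast
    ring
  convert hasSum_re (hasSum_choose_add_sub_one_mul_geometric m hz) using 1
  · simp only [hterm, re_ofReal_mul, exp_ofReal_mul_I_re]
  · rw [sub_neg_eq_add]

theorem abel_sum_neg_int_binomial_cos_general (m : ℕ) (φ : ℝ)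
    (h : Real.cos (φ / 2) ≠ 0) :
    Filter.Tendsto
      (fun r : ℝ =>
        ∑' k : ℕ, (-1 : ℝ) ^ k * ((k + m - 1).choose k : ℝ) * r ^ k * Real.cos (k * φ))
      (nhdsWithin 1 (Set.Ioo 0 1))
      (nhds (Real.cos (m * φ / 2) / (2 ^ m * Real.cos (φ / 2) ^ m))) := by
  have hne : 1 + exp (φ * I) ≠ 0 := by
    rw [one_add_exp_mul_I]
    exact mul_ne_zero (mul_ne_zero two_ne_zero (ofReal_ne_zero.2 h)) (exp_ne_zero _)
  have hcont : ContinuousAt (fun r : ℝ ↦ ((1 + r * exp (φ * I)) ^ m)⁻¹.re) 1 := by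
    refine continuous_re.continuousAt.comp (ContinuousAt.inv₀ (by fun_prop) ?_)
    simpa using pow_ne_zero m hne
  have hlim := hcont.tendsto
  rw [ofReal_one, one_mul, re_inv_one_add_exp_mul_I_pow] at hlim
  refine (tendsto_nhdsWithin_of_tendsto_nhds hlim).congr' ?_
  filter_upwards [self_mem_nhdsWithin] with r hr
  exact ((hasSum_neg_one_pow_choose_mul_pow_mul_cos m φ
    (abs_lt.2 ⟨by linarith [hr.1], hr.2⟩)).tsum_eq).symm

theorem abel_sum_neg_int_binomial_cos (m : ℕ) (hm : 1 ≤ m) (φ : ℝ)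
    (h : Real.cos (φ / 2) ≠ 0) :
    Filter.Tendsto
      (fun r : ℝ =>
        ∑' k : ℕ, (-1 : ℝ) ^ k * ((k + m - 1).choose k : ℝ) * r ^ k * Real.cos (k * φ))
      (nhdsWithin 1 (Set.Ioo 0 1))
      (nhds (Real.cos (m * φ / 2) / (2 ^ m * Real.cos (φ / 2) ^ m))) :=
  abel_sum_neg_int_binomial_cos_general m φ h
end

section
/- Define B(1/2, k) = (∏_{j=0}^{k−1} (1/2 − j)) / k! for k ∈ ℕ. Then ∑_{k≥0} B(1/2, k) = √2, i.e. 1 + 1/2 − (1·1)/(2·4) + (1·1·3)/(2·4·6) − (1·1·3·5)/(2·4·6·8) + ⋯ = √2. -/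
/-! The coefficients `c k = Ring.choose a k` satisfy `(k + 1) c (k + 1) = (a - k) c k`, so for
`k ≥ a` we get `a |c k| = k |c k| - (k + 1) |c (k + 1)|`: the tail sums of `|c k|` telescope and are
bounded, hence `∑ c k` converges absolutely when `a > 0`. On `|x| < 1` the binomial series
`∑ c k x ^ k` sums to `(1 + x) ^ a`, and Abel's limit theorem lets `x → 1⁻`, giving `∑ c k = 2 ^ a`.
The theorem is the case `a = 1 / 2`. -/
open Finset Filter Topology Polynomial

namespace Ring

variable {K : Type*} [Field K] [CharZero K]

theorem choose_eq_prod_range_div (a : K) (n : ℕ) :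
    choose a n = (∏ j ∈ range n, (a - j)) / n.factorial := by
  rw [choose_eq_smul, ← descPochhammer_eval_eq_prod_range, smul_eq_mul, inv_mul_eq_div,
    ← descPochhammer_map (Int.castRingHom K), eval_map, ← eval₂_smulOneHom_eq_smeval,
    Subsingleton.elim (Int.castRingHom K) RingHom.smulOneHom]

theorem choose_succ_mul_succ (a : K) (n : ℕ) :
    choose a (n + 1) * (n + 1) = choose a n * (a - n) := by
  rw [choose_eq_prod_range_div, choose_eq_prod_range_div, prod_range_succ, Nat.factorial_succ]
  push_cast
  field_simp

end Ring

namespace Real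

open Ring

theorem mul_sum_abs_choose_add {a : ℝ} {N : ℕ} (hN : a ≤ N) (n : ℕ) :
    a * ∑ k ∈ range n, |choose a (N + k)| = N * |choose a N| - (N + n) * |choose a (N + n)| := by
  induction n with
  | zero => simp
  | succ n ih =>
    have hrec : |choose a (N + n + 1)| * (N + n + 1) = |choose a (N + n)| * (N + n - a) := by
      have hle : a ≤ N + n := by linarith [(n.cast_nonneg : (0 : ℝ) ≤ n)]
      have := congrArg abs (choose_succ_mul_succ a (N + n))
      push_cast at this
      rwa [abs_mul, abs_mul, abs_sub_comm, abs_of_nonneg (sub_nonneg.mpr hle),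
        abs_of_pos (by positivity : (0 : ℝ) < N + n + 1)] at this
    rw [sum_range_succ, mul_add, ih, ← add_assoc]
    push_cast
    linarith

theorem summable_choose {a : ℝ} (ha : 0 < a) : Summable (fun n ↦ choose a n) := by
  obtain ⟨N, hN⟩ := exists_nat_ge a
  have htail : Summable (fun k ↦ |choose a (N + k)|) := by
    refine summable_of_sum_range_le (c := N * |choose a N| / a) (fun _ ↦ abs_nonneg _) fun n ↦ ?_
    rw [le_div_iff₀' ha, mul_sum_abs_choose_add hN]
    have : 0 ≤ (N + n : ℝ) * |choose a (N + n)| := by positivity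
    linarith
  simp_rw [add_comm N] at htail
  exact ((summable_nat_add_iff (f := fun n ↦ |choose a n|) N).mp htail).of_abs

theorem hasSum_choose_mul_pow (a : ℝ) {x : ℝ} (hx : |x| < 1) :
    HasSum (fun n ↦ choose a n * x ^ n) ((1 + x) ^ a) := by
  have hmem : x ∈ Metric.eball (0 : ℝ) 1 := by
    simpa [edist_dist, Real.dist_eq] using hx
  simpa [binomialSeries, FormalMultilinearSeries.coeff_ofScalars, mul_comm] using
    one_add_rpow_hasFPowerSeriesOnBall_zero (a := a) |>.hasSum hmem

theorem hasSum_choose {a : ℝ} (ha : 0 < a) : HasSum (fun n ↦ choose a n) (2 ^ a) := by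
  have hS := summable_choose ha
  have habel := tendsto_tsum_powerSeries_nhdsWithin_lt hS.hasSum.tendsto_sum_nat
  have hpow : Tendsto (fun x : ℝ ↦ ∑' n, choose a n * x ^ n) (𝓝[<] 1) (𝓝 (2 ^ a)) := by
    have hcont : ContinuousAt (fun x : ℝ ↦ (1 + x) ^ a) 1 :=
      (continuousAt_const.add continuousAt_id).rpow_const (Or.inr ha.le)
    rw [← one_add_one_eq_two]
    refine (hcont.tendsto.mono_left nhdsWithin_le_nhds).congr' ?_
    filter_upwards [Ioo_mem_nhdsLT (show (-1 : ℝ) < 1 by norm_num)] with x hx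
    exact (hasSum_choose_mul_pow a (abs_lt.mpr hx)).tsum_eq.symm
  exact tendsto_nhds_unique habel hpow ▸ hS.hasSum

end Real

theorem binomial_half_sum_sqrt_two :
    HasSum (fun k : ℕ => (∏ j ∈ Finset.range k, ((1 : ℝ) / 2 - j)) / k.factorial)
      (Real.sqrt 2) := by
  simp_rw [← Ring.choose_eq_prod_range_div, Real.sqrt_eq_rpow]
  exact Real.hasSum_choose one_half_pos
end

section
/- Define B(1/2, k) = (∏_{j=0}^{k−1} (1/2 − j)) / k! for k ∈ ℕ. Then ∑_{j≥0} (−1)^j · B(1/2, 2j) = √((1 + √2)/2), i.e. 1 + (1·1)/(2·4) − (1·1·3·5)/(2·4·6·8) + (1·1·3·5·7·9)/(2·4·6·8·10·12) − ⋯ = √((1+√2)/2). -/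
/-!
The series is the binomial series of `√(1 + z)` evaluated at `z = i`, on the boundary of its disc of
convergence. It converges absolutely there, because `k |C(1/2, k)|` telescopes. By Chu–Vandermonde,
the Cauchy square of `w = ∑ C(1/2, k) iᵏ` is `∑ C(1, k) iᵏ = 1 + i`. The real part of `w` is the even
alternating sum, and it is nonnegative since `∑_{k ≥ 1} |C(1/2, k)| ≤ 1`. The square root of `1 + i`
with nonnegative real part has real part `√((1 + √2) / 2)`.
-/

open Finset Complex

theorem Ring.choose_eq_prod_range_div_factorial {K : Type*} [Field K] [CharZero K] (r : K)
    (n : ℕ) : Ring.choose r n = (∏ j ∈ range n, (r - j)) / n.factorial := by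
  rw [Ring.choose_eq_smul, ← descPochhammer_eval_eq_prod_range, ← Polynomial.aeval_eq_smeval,
    ← descPochhammer_map (algebraMap ℤ K), Polynomial.eval_map_algebraMap, smul_eq_mul,
    inv_mul_eq_div]

theorem Ring.choose_succ_mul {K : Type*} [Field K] [CharZero K] (r : K) (k : ℕ) :
    Ring.choose r (k + 1) * (k + 1) = Ring.choose r k * (r - k) := by
  rw [Ring.choose_eq_prod_range_div_factorial, Ring.choose_eq_prod_range_div_factorial,
    prod_range_succ, Nat.factorial_succ]
  push_cast
  field_simp

theorem abs_choose_succ_mul {a : ℝ} {k : ℕ} (hk : a ≤ k) :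
    |Ring.choose a (k + 1)| * (k + 1) = |Ring.choose a k| * (k - a) := by
  have h := congrArg abs (Ring.choose_succ_mul a k)
  rwa [abs_mul, abs_mul, abs_of_nonneg (by positivity : (0 : ℝ) ≤ k + 1), abs_sub_comm,
    abs_of_nonneg (sub_nonneg.2 hk)] at h

theorem sum_range_abs_choose_succ_le_one {a : ℝ} (ha₀ : 0 < a) (ha₁ : a ≤ 1) (n : ℕ) :
    ∑ k ∈ range n, |Ring.choose a (k + 1)| ≤ 1 := by
  -- `t` drops by exactly `a |C(a, k + 1)|` at each step and starts at `t 0 = a`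
  set t : ℕ → ℝ := fun k => (k + 1) * |Ring.choose a (k + 1)|
  have step (k : ℕ) : a * |Ring.choose a (k + 1)| = t k - t (k + 1) := by
    have h := abs_choose_succ_mul (a := a) (k := k + 1)
      (by push_cast; linarith [k.cast_nonneg (α := ℝ)])
    simp only [t]
    push_cast at h ⊢
    linarith
  have hsum : a * ∑ k ∈ range n, |Ring.choose a (k + 1)| = a - t n := by
    rw [mul_sum, sum_congr rfl fun k _ => step k, sum_range_sub']
    simp [t, abs_of_pos ha₀]
  have ht : 0 ≤ t n := by positivity
  exact le_of_mul_le_mul_left (by linarith) ha₀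

theorem summable_abs_choose {a : ℝ} (ha₀ : 0 < a) (ha₁ : a ≤ 1) :
    Summable fun k => |Ring.choose a k| :=
  (summable_nat_add_iff 1).1 <|
    summable_of_sum_range_le (fun _ => abs_nonneg _) (sum_range_abs_choose_succ_le_one ha₀ ha₁)

theorem tsum_abs_choose_succ_le_one {a : ℝ} (ha₀ : 0 < a) (ha₁ : a ≤ 1) :
    ∑' k, |Ring.choose a (k + 1)| ≤ 1 :=
  Real.tsum_le_of_sum_range_le (fun _ => abs_nonneg _) (sum_range_abs_choose_succ_le_one ha₀ ha₁)

theorem norm_choose_ofReal_mul_pow_le (a : ℝ) {z : ℂ} (hz : ‖z‖ ≤ 1) (k : ℕ) :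
    ‖Ring.choose (a : ℂ) k * z ^ k‖ ≤ |Ring.choose a k| := by
  rw [norm_mul, ← ofReal_choose, norm_real, Real.norm_eq_abs, norm_pow]
  exact mul_le_of_le_one_right (abs_nonneg _) (pow_le_one₀ (norm_nonneg z) hz)

theorem summable_norm_choose_mul_pow {a : ℝ} (ha₀ : 0 < a) (ha₁ : a ≤ 1) {z : ℂ}
    (hz : ‖z‖ ≤ 1) : Summable fun k => ‖Ring.choose (a : ℂ) k * z ^ k‖ :=
  (summable_abs_choose ha₀ ha₁).of_nonneg_of_le (fun _ => norm_nonneg _)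
    (norm_choose_ofReal_mul_pow_le a hz)

theorem re_tsum_choose_mul_pow_nonneg {a : ℝ} (ha₀ : 0 < a) (ha₁ : a ≤ 1) {z : ℂ}
    (hz : ‖z‖ ≤ 1) : 0 ≤ (∑' k, Ring.choose (a : ℂ) k * z ^ k).re := by
  have hs := summable_norm_choose_mul_pow ha₀ ha₁ hz
  have hs' := (summable_nat_add_iff 1).2 hs
  rw [hs.of_norm.tsum_eq_zero_add, Ring.choose_zero_right, pow_zero, mul_one, add_re, one_re]
  set s := ∑' k, Ring.choose (a : ℂ) (k + 1) * z ^ (k + 1)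
  have hs_le : ‖s‖ ≤ 1 := calc
    ‖s‖ ≤ ∑' k, ‖Ring.choose (a : ℂ) (k + 1) * z ^ (k + 1)‖ := norm_tsum_le_tsum_norm hs'
    _ ≤ ∑' k, |Ring.choose a (k + 1)| :=
      hs'.tsum_le_tsum (fun k => norm_choose_ofReal_mul_pow_le a hz _)
        ((summable_nat_add_iff 1).2 (summable_abs_choose ha₀ ha₁))
    _ ≤ 1 := tsum_abs_choose_succ_le_one ha₀ ha₁
  linarith [neg_abs_le s.re, abs_re_le_norm s]

theorem tsum_choose_mul_pow_mul_tsum {𝕂 : Type*} [NormedField 𝕂] [CharZero 𝕂] [CompleteSpace 𝕂]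
    {a b z : 𝕂} (ha : Summable fun k => ‖Ring.choose a k * z ^ k‖)
    (hb : Summable fun k => ‖Ring.choose b k * z ^ k‖) :
    (∑' k, Ring.choose a k * z ^ k) * (∑' k, Ring.choose b k * z ^ k) =
      ∑' k, Ring.choose (a + b) k * z ^ k := by
  rw [tsum_mul_tsum_eq_tsum_sum_antidiagonal_of_summable_norm ha hb]
  congr 1 with n
  rw [Ring.add_choose_eq n (Commute.all a b), sum_mul]
  refine sum_congr rfl fun ij hij => ?_
  rw [← mem_antidiagonal.1 hij, pow_add]
  ring

theorem tsum_choose_one_mul_pow {𝕂 : Type*} [NormedField 𝕂] [CharZero 𝕂] (z : 𝕂) :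
    ∑' k, Ring.choose (1 : 𝕂) k * z ^ k = 1 + z := by
  have h (k : ℕ) : Ring.choose (1 : 𝕂) k = Nat.choose 1 k := by
    simpa using Ring.choose_natCast (R := 𝕂) 1 k
  rw [tsum_eq_sum (s := range 2) fun k hk => by
    rw [h, Nat.choose_eq_zero_of_lt (by simpa using hk)]; simp]
  simp [h, sum_range_succ]

theorem hasSum_re_tsum_choose_mul_I_pow {a : ℝ}
    (h : Summable fun k => ‖Ring.choose (a : ℂ) k * I ^ k‖) :
    HasSum (fun j => (-1) ^ j * Ring.choose a (2 * j))
      (∑' k, Ring.choose (a : ℂ) k * I ^ k).re := by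
  have hre := hasSum_re h.of_norm.hasSum
  rw [← (mul_right_injective₀ (two_ne_zero' ℕ)).hasSum_iff] at hre
  · convert hre using 2 with j
    rw [Function.comp_apply, pow_mul, I_sq, ← ofReal_choose]
    norm_cast
    ring
  · rintro k hk
    obtain ⟨j, rfl | rfl⟩ := Nat.even_or_odd' k
    · exact absurd ⟨j, rfl⟩ hk
    · rw [pow_succ, pow_mul, I_sq, ← mul_assoc, mul_I_re, ← ofReal_choose, ← ofReal_one,
        ← ofReal_neg, ← ofReal_pow, ← ofReal_mul, ofReal_im, neg_zero]

theorem Complex.norm_one_add_I : ‖1 + I‖ = √2 := by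
  simpa [one_add_one_eq_two] using norm_add_mul_I 1 1

theorem Complex.re_eq_sqrt_of_sq_eq {w z : ℂ} (h : w ^ 2 = z) (hw : 0 ≤ w.re) :
    w.re = √((‖z‖ + z.re) / 2) := by
  rw [← Real.sqrt_sq hw, ← h, norm_pow, Complex.sq_norm, normSq_apply]
  congr 1
  simp only [sq, mul_re]
  ring

theorem binomial_half_even_alternating_sum :
    HasSum
      (fun j : ℕ => (-1 : ℝ) ^ j * ((∏ i ∈ Finset.range (2 * j), ((1 : ℝ) / 2 - i)) / (2 * j).factorial))
      (Real.sqrt ((1 + Real.sqrt 2) / 2)) := by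
  set w := ∑' k, Ring.choose ((1 / 2 : ℝ) : ℂ) k * I ^ k
  have hI : ‖I‖ ≤ 1 := by simp
  have hs := summable_norm_choose_mul_pow (a := 1 / 2) (by norm_num) (by norm_num) hI
  have hsq : w ^ 2 = 1 + I := by
    rw [sq, tsum_choose_mul_pow_mul_tsum hs hs, ← tsum_choose_one_mul_pow]
    norm_num
  have hre : w.re = √((1 + √2) / 2) := by
    rw [re_eq_sqrt_of_sq_eq hsq (re_tsum_choose_mul_pow_nonneg (by norm_num) (by norm_num) hI),
      norm_one_add_I, add_re, one_re, I_re, add_zero, add_comm]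
  simp_rw [← Ring.choose_eq_prod_range_div_factorial, ← hre]
  exact hasSum_re_tsum_choose_mul_I_pow hs
end

section
/- Let d(k) = C(2k, k) / 4^k (so d(k) = (1·3·5···(2k−1))/(2·4·6···(2k)) for k ≥ 1, d(0) = 1), and let φ ∈ (−π, π). Then as r → 1 from below with r ∈ (0,1), the function r ↦ ∑_{k≥0} (−1)^k · d(k) · r^k · cos(kφ) tends to cos(φ/4) / √(2·cos(φ/2)). -/
/-!
The coefficients `(-1)^k d(k)` are the generalized binomial coefficients `choose (-1/2) k`, so for
`|r| < 1` the series is the real part of the binomial series of `(1 + r e^{iφ})^{-1/2}`. Since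
`1 + e^{iφ} = 2 cos(φ/2) e^{iφ/2}` lies in the slit plane, the principal power is continuous there,
and the Abel limit is the real part of `(2 cos(φ/2))^{-1/2} e^{-iφ/4}`.
-/

open Complex Filter Topology Set
open scoped Real

namespace Ring

theorem succ_nsmul_choose_succ {R : Type*} [NonAssocRing R] [Pow R ℕ] [NatPowAssoc R]
    [BinomialRing R] (r : R) (n : ℕ) :
    (n + 1) • choose r (n + 1) = choose r n * (r - n) := by
  simpa [choose_one_right] using choose_smul_choose r (Nat.le_succ n)

theorem choose_neg_one_half {K : Type*} [Field K] [CharZero K] (n : ℕ) :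
    choose (-(1 / 2) : K) n = (-1) ^ n * n.centralBinom / 4 ^ n := by
  induction n with
  | zero => simp
  | succ n ih =>
    have hrec := succ_nsmul_choose_succ (-(1 / 2) : K) n
    have hcb : ((n + 1 : ℕ) : K) * (n + 1).centralBinom = 2 * (2 * n + 1) * n.centralBinom := by
      exact_mod_cast Nat.succ_mul_centralBinom_succ n
    rw [ih, ← Nat.cast_smul_eq_nsmul K, smul_eq_mul] at hrec
    have hn : ((n + 1 : ℕ) : K) ≠ 0 := Nat.cast_ne_zero.mpr n.succ_ne_zero
    apply mul_left_cancel₀ hn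
    calc _ = (-1 : K) ^ n * n.centralBinom / 4 ^ n * (-(1 / 2) - n) := hrec
      _ = (-1) ^ (n + 1) * (2 * (2 * n + 1) * n.centralBinom) / 4 ^ (n + 1) := by ring
      _ = ((n + 1 : ℕ) : K) * ((-1) ^ (n + 1) * (n + 1).centralBinom / 4 ^ (n + 1)) := by
        rw [← hcb]; ring

end Ring

theorem Real.cos_half_pos {θ : ℝ} (hθ : θ ∈ Ioo (-π) π) : 0 < Real.cos (θ / 2) :=
  Real.cos_pos_of_mem_Ioo ⟨by linarith [hθ.1], by linarith [hθ.2]⟩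

namespace Complex

theorem one_add_exp_mul_I (θ : ℝ) :
    1 + exp (θ * I) = (2 * Real.cos (θ / 2) : ℝ) * exp ((θ / 2 : ℝ) * I) := by
  push_cast
  rw [Complex.cos, mul_div_cancel₀ _ two_ne_zero, add_mul, ← exp_add, ← exp_add]
  ring_nf
  simp [add_comm]

variable {θ : ℝ}

theorem norm_one_add_exp_mul_I (hθ : θ ∈ Ioo (-π) π) :
    ‖1 + exp (θ * I)‖ = 2 * Real.cos (θ / 2) := by
  have := Real.cos_half_pos hθ
  rw [one_add_exp_mul_I, norm_mul, norm_exp_ofReal_mul_I, norm_real,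
    Real.norm_of_nonneg (by positivity), mul_one]

theorem arg_one_add_exp_mul_I (hθ : θ ∈ Ioo (-π) π) : arg (1 + exp (θ * I)) = θ / 2 := by
  rw [one_add_exp_mul_I, arg_real_mul _ (by linarith [Real.cos_half_pos hθ]), exp_mul_I,
    arg_cos_add_sin_mul_I ⟨by linarith [hθ.1, Real.pi_pos], by linarith [hθ.2, Real.pi_pos]⟩]

theorem one_add_exp_mul_I_mem_slitPlane (hθ : θ ∈ Ioo (-π) π) : 1 + exp (θ * I) ∈ slitPlane := by
  rw [mem_slitPlane_iff_arg, arg_one_add_exp_mul_I hθ, ← norm_ne_zero_iff,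
    norm_one_add_exp_mul_I hθ]
  constructor <;> linarith [hθ.2, Real.pi_pos, Real.cos_half_pos hθ]

theorem re_one_add_exp_mul_I_cpow (a : ℝ) (hθ : θ ∈ Ioo (-π) π) :
    ((1 + exp (θ * I)) ^ (a : ℂ)).re = (2 * Real.cos (θ / 2)) ^ a * Real.cos (a * θ / 2) := by
  rw [cpow_ofReal_re, norm_one_add_exp_mul_I hθ, arg_one_add_exp_mul_I hθ]
  ring_nf

theorem hasSum_choose_mul_pow (a : ℂ) {z : ℂ} (hz : ‖z‖ < 1) :
    HasSum (fun n ↦ Ring.choose a n * z ^ n) ((1 + z) ^ a) := by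
  have hz' : z ∈ Metric.eball (0 : ℂ) 1 := by
    rwa [mem_eball_zero_iff, ← ofReal_norm, ENNReal.ofReal_lt_one]
  simpa [binomialSeries, FormalMultilinearSeries.coeff_ofScalars, mul_comm] using
    one_add_cpow_hasFPowerSeriesOnBall_zero.hasSum hz'

theorem hasSum_choose_mul_pow_mul_cos (a : ℝ) {r : ℝ} (hr : |r| < 1) (θ : ℝ) :
    HasSum (fun n : ℕ ↦ Ring.choose a n * r ^ n * Real.cos (n * θ))
      ((1 + r * exp (θ * I)) ^ (a : ℂ)).re := by
  have hz : ‖(r : ℂ) * exp (θ * I)‖ < 1 := by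
    rwa [norm_mul, norm_exp_ofReal_mul_I, mul_one, norm_real, Real.norm_eq_abs]
  convert hasSum_re (hasSum_choose_mul_pow a hz) using 2 with n
  rw [← ofReal_choose, mul_pow, ← exp_nat_mul, ← ofReal_pow, ← mul_assoc, ← ofReal_mul,
    ← mul_assoc, ← ofReal_natCast, ← ofReal_mul, re_ofReal_mul, exp_ofReal_mul_I_re]

end Complex

theorem tendsto_tsum_choose_mul_pow_mul_cos (a : ℝ) {θ : ℝ} (hθ : θ ∈ Ioo (-π) π) :
    Tendsto (fun r : ℝ ↦ ∑' n : ℕ, Ring.choose a n * r ^ n * Real.cos (n * θ)) (𝓝[<] 1)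
      (𝓝 ((2 * Real.cos (θ / 2)) ^ a * Real.cos (a * θ / 2))) := by
  have hslit := one_add_exp_mul_I_mem_slitPlane hθ
  have hcont : ContinuousAt (fun r : ℝ ↦ ((1 + r * exp (θ * I)) ^ (a : ℂ)).re) 1 := by
    fun_prop (disch := simpa)
  rw [← re_one_add_exp_mul_I_cpow a hθ]
  have hlim := hcont.tendsto.mono_left (nhdsWithin_le_nhds (s := Iio 1))
  rw [ofReal_one, one_mul] at hlim
  refine hlim.congr' ?_
  filter_upwards [Ioo_mem_nhdsLT (show (-1 : ℝ) < 1 by norm_num)] with r hr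
  exact (hasSum_choose_mul_pow_mul_cos a (abs_lt.2 hr) θ).tsum_eq.symm

theorem abel_sum_central_binomial_cos (φ : ℝ) (hφ : φ ∈ Set.Ioo (-Real.pi) Real.pi) :
    Filter.Tendsto
      (fun r : ℝ =>
        ∑' k : ℕ, (-1 : ℝ) ^ k * (((2 * k).choose k : ℝ) / 4 ^ k) * r ^ k * Real.cos (k * φ))
      (nhdsWithin 1 (Set.Ioo 0 1))
      (nhds (Real.cos (φ / 4) / Real.sqrt (2 * Real.cos (φ / 2)))) := by
  have hcoeff (k : ℕ) :
      (-1 : ℝ) ^ k * (((2 * k).choose k : ℝ) / 4 ^ k) = Ring.choose (-(1 / 2) : ℝ) k := by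
    rw [Ring.choose_neg_one_half, Nat.centralBinom_eq_two_mul_choose, mul_div_assoc]
  have hlimit : (2 * Real.cos (φ / 2)) ^ (-(1 / 2) : ℝ) * Real.cos (-(1 / 2) * φ / 2) =
      Real.cos (φ / 4) / Real.sqrt (2 * Real.cos (φ / 2)) := by
    have := Real.cos_half_pos hφ
    rw [Real.rpow_neg (by positivity), ← Real.sqrt_eq_rpow, neg_mul, neg_div, Real.cos_neg]
    ring_nf
  simp_rw [hcoeff, ← hlimit]
  exact (tendsto_tsum_choose_mul_pow_mul_cos _ hφ).mono_left
    (nhdsWithin_mono _ Set.Ioo_subset_Iio_self)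
end

section
/- Let d(k) = C(2k, k) / 4^k. Then the partial sums ∑_{k=0}^{N−1} (−1)^k · d(k) converge, as N → ∞, to 1/√2; i.e. 1 − 1/2 + (1·3)/(2·4) − (1·3·5)/(2·4·6) + (1·3·5·7)/(2·4·6·8) − ⋯ = 1/√2. -/
/-!
Since `Ring.choose (-1/2) n = (-1)^n C(2n,n)/4^n`, the binomial series gives
`∑ (-1)^n d(n) x^n = (1 + x)^(-1/2)` for `|x| < 1`. The terms `d(n)` decrease to `0`
(indeed `(2n+1) d(n)^2 ≤ 1`), so the alternating series converges, and Abel's limit theorem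
identifies its sum with the limit `2^(-1/2)` of `(1 + x)^(-1/2)` as `x → 1⁻`.
-/

open Filter Topology Nat

theorem centralBinom_div_four_pow_succ {K : Type*} [Field K] [CharZero K] (n : ℕ) :
    (centralBinom (n + 1) / 4 ^ (n + 1) : K) =
      (2 * n + 1) / (2 * n + 2) * (centralBinom n / 4 ^ n) := by
  have hc : ((n + 1) * centralBinom (n + 1) : K) = 2 * (2 * n + 1) * centralBinom n := by
    exact_mod_cast succ_mul_centralBinom_succ n
  have hn : (n + 1 : K) ≠ 0 := by exact_mod_cast n.succ_ne_zero
  rw [pow_succ]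
  field_simp
  linear_combination 2 * hc

theorem Ring.choose_neg_half {K : Type*} [Field K] [CharZero K] (n : ℕ) :
    Ring.choose (-1 / 2 : K) n = (-1) ^ n * (centralBinom n / 4 ^ n) := by
  induction n with
  | zero => simp
  | succ n ih =>
    -- `choose_smul_choose` with `k = n` reads `(n + 1) • choose r (n + 1) = choose r n * (r - n)`
    have h := Ring.choose_smul_choose (-1 / 2 : K) (Nat.le_add_right n 1)
    rw [Nat.add_sub_cancel_left, Ring.choose_one_right, Nat.choose_succ_self_right, nsmul_eq_mul,
      ih] at h
    rw [centralBinom_div_four_pow_succ]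
    push_cast at h
    generalize Ring.choose (-1 / 2 : K) (n + 1) = c at h ⊢
    field_simp at h ⊢
    linear_combination h

theorem hasSum_neg_one_pow_mul_centralBinom_div_four_pow_mul_pow {x : ℝ} (hx : |x| < 1) :
    HasSum (fun n ↦ (-1) ^ n * (centralBinom n / 4 ^ n : ℝ) * x ^ n) ((1 + x) ^ (-1 / 2 : ℝ)) := by
  have h := (Real.one_add_rpow_hasFPowerSeriesOnBall_zero (a := -1 / 2)).hasSum (y := x)
    (by simpa [enorm_eq_nnnorm, ← NNReal.coe_lt_one] using hx)
  simpa only [binomialSeries, FormalMultilinearSeries.ofScalars_apply_eq, smul_eq_mul,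
    zero_add, Ring.choose_neg_half] using h

theorem antitone_centralBinom_div_four_pow : Antitone fun n ↦ (centralBinom n / 4 ^ n : ℝ) := by
  refine antitone_nat_of_succ_le fun n ↦ ?_
  rw [centralBinom_div_four_pow_succ]
  exact mul_le_of_le_one_left (by positivity) ((div_le_one (by positivity)).2 (by linarith))

theorem two_mul_add_one_mul_sq_centralBinom_div_four_pow_le_one (n : ℕ) :
    (2 * n + 1) * (centralBinom n / 4 ^ n : ℝ) ^ 2 ≤ 1 := by
  induction n with
  | zero => simp
  | succ n ih =>
    have hratio : (2 * n + 3) * ((2 * n + 1) / (2 * n + 2)) ^ 2 ≤ (2 * n + 1 : ℝ) := by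
      rw [div_pow, mul_div_assoc', div_le_iff₀ (by positivity)]
      nlinarith
    calc (2 * (n + 1 : ℕ) + 1) * (centralBinom (n + 1) / 4 ^ (n + 1) : ℝ) ^ 2
        = (2 * n + 3) * ((2 * n + 1) / (2 * n + 2)) ^ 2 * (centralBinom n / 4 ^ n : ℝ) ^ 2 := by
          rw [centralBinom_div_four_pow_succ]; push_cast; ring
      _ ≤ (2 * n + 1) * (centralBinom n / 4 ^ n : ℝ) ^ 2 := by gcongr
      _ ≤ 1 := ih

theorem tendsto_centralBinom_div_four_pow_atTop_zero :
    Tendsto (fun n ↦ (centralBinom n / 4 ^ n : ℝ)) atTop (𝓝 0) := by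
  have hbound : Tendsto (fun n : ℕ ↦ √(1 / ((n : ℝ) + 1))) atTop (𝓝 0) := by
    simpa only [Real.sqrt_zero] using tendsto_one_div_add_atTop_nhds_zero_nat.sqrt
  refine squeeze_zero (fun n ↦ by positivity) (fun n ↦ Real.le_sqrt_of_sq_le ?_) hbound
  rw [le_div_iff₀ (by positivity)]
  nlinarith [two_mul_add_one_mul_sq_centralBinom_div_four_pow_le_one n,
    sq_nonneg (centralBinom n / 4 ^ n : ℝ), n.cast_nonneg (α := ℝ)]

theorem alternating_central_binomial_sum :
    Filter.Tendsto
      (fun N : ℕ => ∑ k ∈ Finset.range N, (-1 : ℝ) ^ k * (((2 * k).choose k : ℝ) / 4 ^ k))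
      Filter.atTop (nhds (1 / Real.sqrt 2)) := by
  simp_rw [← centralBinom_eq_two_mul_choose]
  obtain ⟨l, hl⟩ := antitone_centralBinom_div_four_pow.tendsto_alternating_series_of_tendsto_zero
    tendsto_centralBinom_div_four_pow_atTop_zero
  have abel : Tendsto (fun x : ℝ ↦ (1 + x) ^ (-1 / 2 : ℝ)) (𝓝[<] 1) (𝓝 l) := by
    refine (Real.tendsto_tsum_powerSeries_nhdsWithin_lt hl).congr' ?_
    filter_upwards [Ioo_mem_nhdsLT (show (-1 : ℝ) < 1 by norm_num)] with x hx
    exact (hasSum_neg_one_pow_mul_centralBinom_div_four_pow_mul_pow (abs_lt.2 hx)).tsum_eq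
  have hcont : ContinuousAt (fun x : ℝ ↦ (1 + x) ^ (-1 / 2 : ℝ)) 1 := by
    fun_prop (disch := norm_num)
  have hl_eq : l = 1 / √2 := by
    refine tendsto_nhds_unique abel ((hcont.tendsto.mono_left nhdsWithin_le_nhds).trans_eq ?_)
    rw [Real.sqrt_eq_rpow, one_div, ← Real.rpow_neg zero_le_two]
    norm_num
  exact hl_eq ▸ hl
end

section
/- Let d(k) = C(2k, k) / 4^k. Then the partial sums ∑_{j=0}^{N−1} (−1)^j · d(2j) converge, as N → ∞, to (1/2)·√(1 + √2); i.e. 1 − (1·3)/(2·4) + (1·3·5·7)/(2·4·6·8) − (1·3·5·7·9·11)/(2·4·6·8·10·12) + ⋯ = (1/2)·√(1+√2). -/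
/-! For `‖z‖ < 1` the binomial series gives `∑ d(n) zⁿ = (1 - z)^(-1/2)`. At `z = i t` the even
terms form the real part, `∑ (-1)ⁿ d(2n) t²ⁿ = Re w`, where `w² (1 - i t) = 1`; comparing real
and imaginary parts yields `(Re w)² = (1 + √(1 + t²)) / (2 (1 + t²))`, and `Re w ≥ 0` because it
is the sum of an alternating series with decreasing terms. By the Leibniz test the series
converges at `t = 1`, and Abel's limit theorem identifies its sum with the limit
`√((1 + √2) / 4)` as `t² → 1⁻`. -/

open Filter Topology Complex

noncomputable def centralBinomDivFourPow (n : ℕ) : ℝ := n.centralBinom / 4 ^ n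

lemma centralBinomDivFourPow_pos (n : ℕ) : 0 < centralBinomDivFourPow n := by
  unfold centralBinomDivFourPow
  have := n.centralBinom_pos
  positivity

lemma centralBinomDivFourPow_succ (n : ℕ) :
    centralBinomDivFourPow (n + 1) = (2 * n + 1) / (2 * n + 2) * centralBinomDivFourPow n := by
  have h : ((n + 1 : ℕ) : ℝ) * (n + 1).centralBinom = 2 * (2 * n + 1) * n.centralBinom := by
    exact_mod_cast Nat.succ_mul_centralBinom_succ n
  simp only [centralBinomDivFourPow, pow_succ]
  push_cast at h
  field_simp
  linear_combination 2 * h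

lemma centralBinomDivFourPow_antitone : Antitone centralBinomDivFourPow := by
  refine antitone_nat_of_succ_le fun n ↦ ?_
  rw [centralBinomDivFourPow_succ]
  refine mul_le_of_le_one_left (centralBinomDivFourPow_pos n).le ?_
  rw [div_le_one (by positivity)]
  linarith

lemma centralBinomDivFourPow_sq_mul_le_one (n : ℕ) :
    centralBinomDivFourPow n ^ 2 * (n + 1) ≤ 1 := by
  induction n with
  | zero => simp [centralBinomDivFourPow]
  | succ n ih =>
    have hn : (0 : ℝ) ≤ n := n.cast_nonneg
    have hratio : ((2 * n + 1) / (2 * n + 2)) ^ 2 * ((n + 1 : ℕ) + 1 : ℝ) ≤ n + 1 := by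
      rw [div_pow, div_mul_eq_mul_div, div_le_iff₀ (by positivity)]
      push_cast
      nlinarith
    calc centralBinomDivFourPow (n + 1) ^ 2 * ((n + 1 : ℕ) + 1 : ℝ)
        = ((2 * n + 1) / (2 * n + 2)) ^ 2 * ((n + 1 : ℕ) + 1 : ℝ) *
            centralBinomDivFourPow n ^ 2 := by
          rw [centralBinomDivFourPow_succ]; ring
      _ ≤ (n + 1) * centralBinomDivFourPow n ^ 2 := by gcongr
      _ ≤ 1 := by linarith

lemma tendsto_centralBinomDivFourPow_atTop : Tendsto centralBinomDivFourPow atTop (𝓝 0) := by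
  have hbound (n : ℕ) : centralBinomDivFourPow n ≤ √(1 / (n + 1)) := by
    rw [Real.le_sqrt (centralBinomDivFourPow_pos n).le (by positivity),
      le_div_iff₀ (by positivity)]
    exact centralBinomDivFourPow_sq_mul_le_one n
  have hsqrt : Tendsto (fun n : ℕ ↦ √(1 / (n + 1))) atTop (𝓝 0) := by
    simpa only [Real.sqrt_zero, Function.comp_def] using
      (Real.continuous_sqrt.tendsto 0).comp tendsto_one_div_add_atTop_nhds_zero_nat
  exact squeeze_zero (fun n ↦ (centralBinomDivFourPow_pos n).le) hbound hsqrt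

lemma Ring.choose_half_add_sub_one (n : ℕ) :
    Ring.choose ((1 / 2 : ℂ) + n - 1) n = centralBinomDivFourPow n := by
  induction n with
  | zero => simp [centralBinomDivFourPow]
  | succ n ih =>
    have harg : (1 / 2 : ℂ) + (n + 1 : ℕ) - 1 - 1 = 1 / 2 + n - 1 := by push_cast; ring
    have hrec : Ring.choose ((1 / 2 : ℂ) + (n + 1 : ℕ) - 1) (n + 1) =
        ((1 / 2 : ℂ) + n) / (n + 1) * Ring.choose ((1 / 2 : ℂ) + n - 1) n := by
      simp only [Ring.choose_eq_smul, descPochhammer_succ_left, Polynomial.smeval_X_mul,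
        Polynomial.smeval_comp, Polynomial.smeval_sub, Polynomial.smeval_X, Polynomial.smeval_one,
        pow_one, pow_zero, one_smul, harg, Nat.factorial_succ, smul_eq_mul]
      push_cast
      field_simp
      ring
    rw [hrec, ih, centralBinomDivFourPow_succ]
    push_cast
    field_simp
    ring

lemma hasSum_centralBinomDivFourPow_mul_pow {z : ℂ} (hz : ‖z‖ < 1) :
    HasSum (fun n ↦ (centralBinomDivFourPow n : ℂ) * z ^ n) (1 / (1 - z) ^ (1 / 2 : ℂ)) := by
  have h := (one_div_one_sub_cpow_hasFPowerSeriesOnBall_zero (1 / 2)).hasSum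
    (y := z) (by simpa [← ENNReal.ofReal_one, Metric.eball_ofReal] using hz)
  simpa only [FormalMultilinearSeries.ofScalars_apply_eq, Ring.choose_half_add_sub_one,
    smul_eq_mul, zero_add] using h

lemma one_div_cpow_half_sq_mul_self {w : ℂ} (hw : w ≠ 0) :
    (1 / w ^ (1 / 2 : ℂ)) ^ 2 * w = 1 := by
  rw [div_pow, one_div 2, cpow_ofNat_inv_pow, one_pow, one_div_mul_cancel hw]

lemma re_sq_of_sq_mul_one_sub_mul_I {w : ℂ} {t : ℝ} (h : w ^ 2 * (1 - t * I) = 1) :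
    w.re ^ 2 = (1 + √(1 + t ^ 2)) / (2 * (1 + t ^ 2)) := by
  obtain ⟨u, v⟩ := w
  have hre := congrArg re h
  have him := congrArg im h
  simp only [sq, mul_re, mul_im, sub_re, sub_im, one_re, one_im, ofReal_re, ofReal_im, I_re,
    I_im] at hre him
  simp only at hre him ⊢
  have hP : (u ^ 2 - v ^ 2) * (1 + t ^ 2) = 1 := by linear_combination hre - t * him
  have hQ : 2 * u * v * (1 + t ^ 2) = t := by linear_combination t * hre + him
  have hnorm : (u ^ 2 + v ^ 2) * (1 + t ^ 2) = √(1 + t ^ 2) := by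
    rw [← pow_left_inj₀ (by positivity) (Real.sqrt_nonneg _) two_ne_zero,
      Real.sq_sqrt (by positivity)]
    linear_combination ((u ^ 2 - v ^ 2) * (1 + t ^ 2) + 1) * hP +
      (2 * u * v * (1 + t ^ 2) + t) * hQ
  field_simp
  linear_combination hP + hnorm

lemma ofReal_mul_I_pow_two_mul (t : ℝ) (n : ℕ) :
    ((t : ℂ) * I) ^ (2 * n) = ((-t ^ 2) ^ n : ℝ) := by
  rw [pow_mul, mul_pow, I_sq]
  push_cast
  ring

lemma hasSum_alternating_centralBinomDivFourPow_even {t : ℝ} (ht : |t| < 1) :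
    HasSum (fun n ↦ (-1) ^ n * centralBinomDivFourPow (2 * n) * (t ^ 2) ^ n)
      (1 / (1 - t * I) ^ (1 / 2 : ℂ)).re := by
  have h := hasSum_re (hasSum_centralBinomDivFourPow_mul_pow (z := t * I) (by simpa using ht))
  rw [← (mul_right_injective₀ (two_ne_zero' ℕ)).hasSum_iff] at h
  · convert h using 2 with n
    simp only [Function.comp_apply, ofReal_mul_I_pow_two_mul, ← ofReal_mul, ofReal_re]
    ring
  · intro n hn
    obtain ⟨m, rfl⟩ : Odd n := Nat.not_even_iff_odd.1 fun ⟨m, hm⟩ ↦ hn ⟨m, by simp only; omega⟩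
    rw [pow_succ, ofReal_mul_I_pow_two_mul, ← mul_assoc, ← ofReal_mul, ← mul_assoc, ← ofReal_mul]
    simp only [mul_re, ofReal_re, ofReal_im, I_re, I_im]
    ring

lemma Antitone.nonneg_of_hasSum_alternating {g : ℕ → ℝ} (hg : Antitone g) {l : ℝ}
    (h : HasSum (fun n ↦ (-1) ^ n * g n) l) : 0 ≤ l := by
  simpa using hg.alternating_series_le_tendsto h.tendsto_sum_nat 0

lemma tsum_alternating_centralBinomDivFourPow_even {x : ℝ} (hx0 : 0 ≤ x) (hx1 : x < 1) :
    ∑' n, (-1) ^ n * centralBinomDivFourPow (2 * n) * x ^ n =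
      √((1 + √(1 + x)) / (2 * (1 + x))) := by
  set t := √x
  have ht2 : t ^ 2 = x := Real.sq_sqrt hx0
  have ht : |t| < 1 := by
    rw [abs_of_nonneg (Real.sqrt_nonneg x), Real.sqrt_lt' one_pos]
    linarith
  have hsum := hasSum_alternating_centralBinomDivFourPow_even ht
  set w : ℂ := 1 / (1 - t * I) ^ (1 / 2 : ℂ)
  have hw : w ^ 2 * (1 - t * I) = 1 :=
    one_div_cpow_half_sq_mul_self fun h ↦ by simpa using congrArg re h
  have hre : 0 ≤ w.re := by
    refine Antitone.nonneg_of_hasSum_alternating (fun m n hmn ↦ ?_)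
      (by simpa only [mul_assoc] using hsum)
    exact mul_le_mul (centralBinomDivFourPow_antitone (by omega))
      (pow_right_anti₀ (by positivity) (by linarith) hmn) (by positivity)
      (centralBinomDivFourPow_pos _).le
  rw [← ht2, hsum.tsum_eq, ← re_sq_of_sq_mul_one_sub_mul_I hw, Real.sqrt_sq hre]

theorem alternating_central_binomial_even_sum :
    Filter.Tendsto
      (fun N : ℕ => ∑ j ∈ Finset.range N, (-1 : ℝ) ^ j * (((2 * (2 * j)).choose (2 * j) : ℝ) / 4 ^ (2 * j)))
      Filter.atTop (nhds ((1 / 2) * Real.sqrt (1 + Real.sqrt 2))) := by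
  have h_anti : Antitone fun j ↦ centralBinomDivFourPow (2 * j) :=
    centralBinomDivFourPow_antitone.comp_monotone fun _ _ h ↦ by omega
  obtain ⟨l, hl⟩ := h_anti.tendsto_alternating_series_of_tendsto_zero
    (tendsto_centralBinomDivFourPow_atTop.comp (tendsto_id.const_mul_atTop' two_pos))
  have habel := Real.tendsto_tsum_powerSeries_nhdsWithin_lt hl
  have hclosed : Tendsto (fun x : ℝ ↦ √((1 + √(1 + x)) / (2 * (1 + x)))) (𝓝[<] 1)
      (𝓝 (1 / 2 * √(1 + √2))) := by
    have hcont : ContinuousAt (fun x : ℝ ↦ √((1 + √(1 + x)) / (2 * (1 + x)))) 1 := by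
      fun_prop (disch := norm_num)
    have hval : √((1 + √(1 + 1)) / (2 * (1 + 1))) = 1 / 2 * √(1 + √2) := by
      rw [one_add_one_eq_two, Real.sqrt_eq_iff_mul_self_eq (by positivity) (by positivity),
        mul_mul_mul_comm, Real.mul_self_sqrt (by positivity)]
      ring
    exact hval ▸ hcont.tendsto.mono_left nhdsWithin_le_nhds
  have hlim : l = 1 / 2 * √(1 + √2) := by
    refine tendsto_nhds_unique (habel.congr' ?_) hclosed
    filter_upwards [Ioo_mem_nhdsLT (show (0 : ℝ) < 1 by norm_num)] with x hx
    exact tsum_alternating_centralBinomDivFourPow_even hx.1.le hx.2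
  -- `Nat.centralBinom n` is `(2 * n).choose n` by definition, so `hl` is the goal up to unfolding.
  exact hlim ▸ hl
end

section
/- Let λ ≥ 1 be a natural number. Then as r → 1 from below with r ∈ (0,1), the function r ↦ ∑_{j≥0} (−1)^j · C(λ + 2j − 1, 2j) · r^{2j} tends to cos(λπ/4) / 2^{λ/2}; i.e. the Abel sum of 1 − λ(λ+1)/(1·2) + λ(λ+1)(λ+2)(λ+3)/(1·2·3·4) − ⋯ equals cos(λπ/4)/2^{λ/2}. -/
/-!
The series is the real part of `∑ C(m + n - 1, n) (i r)ⁿ = (1 - i r)⁻ᵐ`: the odd terms are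
purely imaginary and the even ones carry `i²ʲ = (-1)ʲ`. This closed form is continuous at `r = 1`,
where `(1 - i)⁻¹ = e^{iπ/4} / √2` gives the value `cos (mπ/4) / √2 ^ m`.
-/

open Complex Filter Set Topology Real

lemma Complex.I_mul_ofReal_pow_two_mul (x : ℝ) (j : ℕ) :
    (I * x) ^ (2 * j) = ((-1) ^ j * x ^ (2 * j) : ℝ) := by
  rw [mul_pow, pow_mul, I_sq]
  push_cast
  ring

lemma Complex.hasSum_re_of_hasSum_mul_I_mul_pow {c : ℕ → ℝ} {x : ℝ} {s : ℂ}
    (h : HasSum (fun n ↦ (c n : ℂ) * (I * x) ^ n) s) :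
    HasSum (fun j ↦ (-1) ^ j * c (2 * j) * x ^ (2 * j)) s.re := by
  have hre := hasSum_re h
  rw [← (mul_right_injective₀ two_ne_zero).hasSum_iff] at hre
  · convert hre using 2 with j
    rw [Function.comp_apply, I_mul_ofReal_pow_two_mul, ← ofReal_mul, ofReal_re]
    ring
  · rintro n hn
    obtain ⟨j, rfl⟩ : Odd n := Nat.not_even_iff_odd.mp fun ⟨j, hj⟩ ↦ hn ⟨j, by simp; omega⟩
    rw [pow_succ, I_mul_ofReal_pow_two_mul, mul_comm I, ← mul_assoc, ← mul_assoc, ← ofReal_mul,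
      ← ofReal_mul, re_ofReal_mul, I_re, mul_zero]

lemma Complex.inv_one_sub_I : (1 - I)⁻¹ = ((√2)⁻¹ : ℝ) * exp ((π / 4 : ℝ) * I) := by
  rw [exp_mul_I, ← ofReal_cos, ← ofReal_sin, Real.cos_pi_div_four, Real.sin_pi_div_four,
    inv_eq_of_mul_eq_one_left]
  push_cast
  field_simp
  linear_combination -I_sq

lemma Complex.re_inv_one_sub_I_pow (m : ℕ) :
    ((1 - I) ^ m)⁻¹.re = Real.cos (m * π / 4) / √2 ^ m := by
  rw [← inv_pow, inv_one_sub_I, mul_pow, ← Complex.exp_nat_mul, ← ofReal_pow,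
    show (m : ℂ) * ((π / 4 : ℝ) * I) = (m * π / 4 : ℝ) * I by push_cast; ring,
    re_ofReal_mul, exp_ofReal_mul_I_re, inv_pow]
  ring

lemma hasSum_neg_one_pow_mul_choose_mul_pow {m : ℕ} (hm : 1 ≤ m) {r : ℝ} (hr : |r| < 1) :
    HasSum (fun j ↦ (-1) ^ j * ((m + 2 * j - 1).choose (2 * j) : ℝ) * r ^ (2 * j))
      ((1 - I * r) ^ m)⁻¹.re := by
  have hIr : ‖I * r‖ < 1 := by simpa using hr
  have hsum := hasSum_choose_mul_geometric_of_norm_lt_one (m - 1) hIr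
  rw [Nat.sub_add_cancel hm, one_div] at hsum
  convert Complex.hasSum_re_of_hasSum_mul_I_mul_pow
    (c := fun n ↦ ((n + (m - 1)).choose (m - 1) : ℝ)) (by exact_mod_cast hsum) using 4 with j
  rw [← Nat.choose_symm_add]
  congr 2
  omega

theorem abel_sum_neg_int_binomial_even (m : ℕ) (hm : 1 ≤ m) :
    Filter.Tendsto
      (fun r : ℝ =>
        ∑' j : ℕ, (-1 : ℝ) ^ j * ((m + 2 * j - 1).choose (2 * j) : ℝ) * r ^ (2 * j))
      (nhdsWithin 1 (Set.Ioo 0 1))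
      (nhds (Real.cos (m * Real.pi / 4) / Real.sqrt 2 ^ m)) := by
  have hne : (1 - I * ((1 : ℝ) : ℂ)) ^ m ≠ 0 :=
    pow_ne_zero _ fun h ↦ by simpa using congrArg im h
  have hcont : ContinuousAt (fun r : ℝ ↦ ((1 - I * r) ^ m)⁻¹.re) 1 :=
    continuous_re.continuousAt.comp ((Continuous.continuousAt (by fun_prop)).inv₀ hne)
  have hlim : Tendsto (fun r : ℝ ↦ ((1 - I * r) ^ m)⁻¹.re) (𝓝[Ioo 0 1] 1)
      (𝓝 ((1 - I) ^ m)⁻¹.re) := by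
    simpa only [ofReal_one, mul_one] using hcont.continuousWithinAt.tendsto
  rw [← re_inv_one_sub_I_pow]
  refine hlim.congr' ?_
  filter_upwards [self_mem_nhdsWithin] with r ⟨hr0, hr1⟩
  exact (hasSum_neg_one_pow_mul_choose_mul_pow hm (abs_lt.2 ⟨by linarith, hr1⟩)).tsum_eq.symm
end
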